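/- arXiv:1808.08918 — 2 statements merged into one kernel-verified Lean document; each statement's English description precedes it below -/
import Mathlib

section
/- If a > a*, where a* is the optimal constant in the 2D Gagliardo-Nirenberg inequality, then the infimum of ∫|∇u|² − (a/2)∫|u|⁴ over u ∈ H^1(ℝ²) with ‖u‖_{L²} = 1 equals −∞. -/
open MeasureTheory Filter
open scoped Topology

noncomputable section

abbrev Plane : Type := EuclideanSpace ℝ (Fin 2)

/-- Membership in `H¹(ℝ²)` (with the natural integrability of the quartic term). -/
def H1 (u : Plane → ℝ) : Prop :=
  Differentiable ℝ u ∧ MemLp u 2 ∧ MemLp u 4 ∧ MemLp (fun x => fderiv ℝ u x) 2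

/-!
Dilating the optimizer, `u_t(x) = t Q₀(t x)`, keeps the mass `∫ u_t² = 1` while multiplying
both `∫ |∇u_t|²` and `∫ u_t⁴` by `t²`. Hence the energy of `u_t` is `t²` times the energy of
`Q₀`, which is `1 - a / a* < 0` because `Q₀` is an optimizer, and it tends to `-∞` as `t → ∞`.
-/

theorem MeasureTheory.MemLp.comp_smul {E F : Type*} [NormedAddCommGroup E] [NormedSpace ℝ E]
    [MeasurableSpace E] [BorelSpace E] [FiniteDimensional ℝ E] [NormedAddCommGroup F]
    {μ : Measure E} [μ.IsAddHaarMeasure] {p : ENNReal} {f : E → F} (hf : MemLp f p μ) {r : ℝ}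
    (hr : r ≠ 0) : MemLp (fun x => f (r • x)) p μ := by
  refine MemLp.comp_of_map ?_ (measurable_const_smul r).aemeasurable
  rw [Measure.map_addHaar_smul μ hr]
  exact hf.smul_measure ENNReal.ofReal_ne_top

/-- The prefactor `t` makes the dilation preserve the `L²` norm in two dimensions. -/
def dilation (t : ℝ) (u : Plane → ℝ) : Plane → ℝ := fun x => t * u (t • x)

def gpEnergy (a : ℝ) (u : Plane → ℝ) : ℝ :=
  (∫ x : Plane, ‖fderiv ℝ u x‖ ^ 2) - a / 2 * ∫ x : Plane, (u x) ^ 4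

section Dilation

variable {t : ℝ} {u : Plane → ℝ}

theorem fderiv_dilation (t : ℝ) (u : Plane → ℝ) (x : Plane) :
    fderiv ℝ (dilation t u) x = t ^ 2 • fderiv ℝ u (t • x) := by
  change fderiv ℝ (t • fun y => u (t • y)) x = _
  rw [fderiv_const_smul_field, Pi.smul_apply, fderiv_comp_smul, smul_smul, sq]

theorem H1.dilation (hu : H1 u) (ht : t ≠ 0) : H1 (dilation t u) := by
  obtain ⟨hdiff, h2, h4, hgrad⟩ := hu
  refine ⟨fun x => ((hdiff _).comp x ((differentiableAt_id).const_smul t)).const_mul t,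
    (h2.comp_smul ht).const_mul t, (h4.comp_smul ht).const_mul t, ?_⟩
  simp_rw [fderiv_dilation]
  exact (hgrad.comp_smul ht).const_smul (t ^ 2)

theorem integral_comp_smul_plane {F : Type*} [NormedAddCommGroup F] [NormedSpace ℝ F]
    (g : Plane → F) (t : ℝ) : ∫ x : Plane, g (t • x) = (t ^ 2)⁻¹ • ∫ x : Plane, g x := by
  rw [Measure.integral_comp_smul, finrank_euclideanSpace_fin,
    abs_of_nonneg (inv_nonneg.2 (sq_nonneg t))]

theorem integral_dilation_pow (ht : t ≠ 0) (n : ℕ) :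
    ∫ x : Plane, (dilation t u x) ^ (n + 2) = t ^ n * ∫ x : Plane, (u x) ^ (n + 2) := by
  simp_rw [dilation, mul_pow, integral_const_mul]
  rw [integral_comp_smul_plane (fun y => u y ^ (n + 2)), smul_eq_mul, ← mul_assoc, pow_add,
    mul_assoc (t ^ n), mul_inv_cancel₀ (pow_ne_zero 2 ht), mul_one]

theorem integral_dilation_sq (ht : t ≠ 0) :
    ∫ x : Plane, (dilation t u x) ^ 2 = ∫ x : Plane, (u x) ^ 2 := by
  simpa using integral_dilation_pow (u := u) ht 0

theorem integral_norm_fderiv_dilation_sq (ht : t ≠ 0) :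
    ∫ x : Plane, ‖fderiv ℝ (dilation t u) x‖ ^ 2 = t ^ 2 * ∫ x : Plane, ‖fderiv ℝ u x‖ ^ 2 := by
  simp_rw [fderiv_dilation, norm_smul, mul_pow, Real.norm_of_nonneg (sq_nonneg t),
    integral_const_mul]
  rw [integral_comp_smul_plane (fun y => ‖fderiv ℝ u y‖ ^ 2), smul_eq_mul]
  field_simp

theorem gpEnergy_dilation (a : ℝ) (ht : t ≠ 0) :
    gpEnergy a (dilation t u) = t ^ 2 * gpEnergy a u := by
  rw [gpEnergy, gpEnergy, integral_norm_fderiv_dilation_sq ht, integral_dilation_pow ht 2]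
  ring

end Dilation

theorem gp_energy_neg_infinity_of_gt_critical_general (astar a : ℝ) (hastar : 0 < astar)
    (ha : astar < a)
    (Q₀ : Plane → ℝ) (hQ₀ : H1 Q₀)
    (hQ₀norm : ∫ x : Plane, (Q₀ x) ^ 2 = 1)
    (hQ₀grad : ∫ x : Plane, ‖fderiv ℝ Q₀ x‖ ^ 2 = 1)
    (hQ₀4 : astar / 2 * ∫ x : Plane, (Q₀ x) ^ 4 = 1) :
    ∀ c : ℝ, ∃ u : Plane → ℝ, H1 u ∧ (∫ x : Plane, (u x) ^ 2 = 1) ∧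
      (∫ x : Plane, ‖fderiv ℝ u x‖ ^ 2) - a / 2 * (∫ x : Plane, (u x) ^ 4) < c := by
  intro c
  have hQ₀energy : gpEnergy a Q₀ < 0 := by
    have hquartic : ∫ x : Plane, (Q₀ x) ^ 4 = 2 / astar := by
      field_simp at hQ₀4 ⊢; linarith
    rw [gpEnergy, hQ₀grad, hquartic, sub_neg, div_mul_div_comm, mul_comm a,
      mul_div_mul_left _ _ two_ne_zero, one_lt_div hastar]
    exact ha
  obtain ⟨t, hlt, ht⟩ := (((tendsto_pow_atTop two_ne_zero).atTop_mul_const_of_neg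
    hQ₀energy).eventually (eventually_lt_atBot c)).and (eventually_gt_atTop 0) |>.exists
  refine ⟨dilation t Q₀, hQ₀.dilation ht.ne', (integral_dilation_sq ht.ne').trans hQ₀norm, ?_⟩
  rw [← gpEnergy, gpEnergy_dilation a ht.ne']
  exact hlt

/-- If `a > a*`, where `a*` is the optimal constant in the 2D Gagliardo–Nirenberg
inequality (with normalized optimizer `Q₀`), then the infimum of
`∫|∇u|² − (a/2)∫|u|⁴` over normalized `u ∈ H¹(ℝ²)` equals `−∞`. -/
theorem gp_energy_neg_infinity_of_gt_critical (astar a : ℝ) (hastar : 0 < astar)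
    (ha : astar < a)
    (hGN : ∀ u : Plane → ℝ, H1 u →
      astar / 2 * ∫ x : Plane, (u x) ^ 4
        ≤ (∫ x : Plane, ‖fderiv ℝ u x‖ ^ 2) * ∫ x : Plane, (u x) ^ 2)
    (Q₀ : Plane → ℝ) (hQ₀ : H1 Q₀)
    (hQ₀norm : ∫ x : Plane, (Q₀ x) ^ 2 = 1)
    (hQ₀grad : ∫ x : Plane, ‖fderiv ℝ Q₀ x‖ ^ 2 = 1)
    (hQ₀4 : astar / 2 * ∫ x : Plane, (Q₀ x) ^ 4 = 1) :
    ∀ c : ℝ, ∃ u : Plane → ℝ, H1 u ∧ (∫ x : Plane, (u x) ^ 2 = 1) ∧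
      (∫ x : Plane, ‖fderiv ℝ u x‖ ^ 2) - a / 2 * (∫ x : Plane, (u x) ^ 4) < c :=
  gp_energy_neg_infinity_of_gt_critical_general astar a hastar ha Q₀ hQ₀ hQ₀norm hQ₀grad hQ₀4
end
end

section
/- Let {f_n} ⊂ H^1(ℝ²) satisfy ‖f_n‖_{L²} = ‖∇f_n‖_{L²} = 1 and (a*/2)‖f_n‖_{L⁴}⁴ → 1. If the dichotomy alternative of concentration-compactness held for {f_n} with splitting parameter λ ∈ (0,1), then 1 ≥ min{1/λ, 1/(1−λ)}, a contradiction; hence dichotomy cannot occur for such almost-optimizing sequences of the Gagliardo-Nirenberg inequality. -/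
open MeasureTheory Filter
open scoped Topology

noncomputable section

/-!
Fix `ε > 0`. For large `n` the supports of `f1 n` and `f2 n` are `3 / ε` apart, so a mollified,
clamped distance function to `support (f1 n)` is a smooth cutoff `χ` with `χ = 1` there, `χ = 0`
on `support (f2 n)` and `‖∇χ‖ ≤ ε`. Gagliardo–Nirenberg is applied to the pieces `χ f_n` and
`(1 - χ) f_n`, whose gradient energies add up to at most `1 + 2ε + 2ε²`. Their masses are at most
`(1 + ε) max(λ, 1 - λ) + o(1)` and `∫ f_n⁴ ≤ ∫ (χ f_n)⁴ + ∫ ((1 - χ) f_n)⁴ + o(1)`, because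
`χ f_n = f1 n + χ g_n` and `(1 - χ) f_n = f2 n + (1 - χ) g_n`, where `g_n = f_n - f1 n - f2 n`
tends to `0` in `L²` and `L⁴`.
Letting `n → ∞` and then `ε → 0` gives `1 ≤ max(λ, 1 - λ)`, which is false.
-/

open Metric Set Function ContinuousLinearMap
open scoped NNReal Convolution

theorem lipschitzWith_clamp_infDist {X : Type*} [PseudoMetricSpace X] (S : Set X) {r : ℝ}
    (hr : 0 < r) :
    LipschitzWith (Real.toNNReal r⁻¹) fun x => max 0 (min 1 (2 - infDist x S / r)) := by
  refine (LipschitzWith.of_dist_le_mul fun x y => ?_).const_min 1 |>.const_max 0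
  rw [Real.coe_toNNReal _ (by positivity), Real.dist_eq, sub_sub_sub_cancel_left, ← sub_div,
    abs_div, abs_of_pos hr, div_eq_inv_mul, ← Real.dist_eq, dist_comm x y]
  gcongr
  simpa using (lipschitz_infDist_pt S).dist_le_mul y x

theorem MeasureTheory.MemLp.integrable_pow_four {α : Type*} [MeasurableSpace α] {μ : Measure α}
    {f : α → ℝ} (hf : MemLp f 4 μ) : Integrable (fun x => f x ^ 4) μ := by
  simpa [(by decide : Even 4).pow_abs] using hf.integrable_norm_pow (p := 4) (by norm_num)

section Cutoff

variable {E : Type*} [NormedAddCommGroup E] [NormedSpace ℝ E] {ε : ℝ} {χ u : E → ℝ} {x : E}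

theorem LipschitzWith.normed_convolution [FiniteDimensional ℝ E] [MeasurableSpace E]
    [BorelSpace E] {μ : Measure E} [μ.IsAddHaarMeasure] {K : ℝ≥0} {h : E → ℝ}
    (hh : LipschitzWith K h) (φ : ContDiffBump (0 : E)) :
    LipschitzWith K (φ.normed μ ⋆[lsmul ℝ ℝ, μ] h) := by
  have hint : ∀ x, Integrable (fun t => φ.normed μ t * h (x - t)) μ := fun x =>
    (φ.continuous_normed.mul (hh.continuous.comp (continuous_const.sub continuous_id)))
      |>.integrable_of_hasCompactSupport φ.hasCompactSupport_normed.mul_right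
  refine LipschitzWith.of_dist_le_mul fun x y => ?_
  simp only [convolution_def, lsmul_apply, smul_eq_mul, Real.dist_eq]
  rw [← integral_sub (hint x) (hint y), ← Real.norm_eq_abs]
  calc ‖∫ t, (φ.normed μ t * h (x - t) - φ.normed μ t * h (y - t)) ∂μ‖
      ≤ ∫ t, φ.normed μ t * (K * dist x y) ∂μ := by
        refine norm_integral_le_of_norm_le
          ((φ.integrable_normed (μ := μ)).mul_const _) (ae_of_all _ fun t => ?_)
        rw [← mul_sub, norm_mul, Real.norm_of_nonneg (φ.nonneg_normed t), ← dist_sub_right x y t]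
        exact mul_le_mul_of_nonneg_left (hh.dist_le_mul _ _) (φ.nonneg_normed t)
    _ = K * dist x y := by rw [integral_mul_const, φ.integral_normed (μ := μ), one_mul]

structure IsCutoff (ε : ℝ) (χ : E → ℝ) : Prop where
  differentiable : Differentiable ℝ χ
  mem_Icc : ∀ x, χ x ∈ Icc (0 : ℝ) 1
  norm_fderiv_le : ∀ x, ‖fderiv ℝ χ x‖ ≤ ε

theorem IsCutoff.nonneg (hχ : IsCutoff ε χ) : 0 ≤ ε :=
  (norm_nonneg _).trans (hχ.norm_fderiv_le 0)

theorem IsCutoff.one_sub (hχ : IsCutoff ε χ) : IsCutoff ε (fun x => 1 - χ x) where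
  differentiable := (differentiable_const 1).sub hχ.differentiable
  mem_Icc x := by
    obtain ⟨h0, h1⟩ := hχ.mem_Icc x
    constructor <;> linarith
  norm_fderiv_le x := by
    rw [fderiv_const_sub, norm_neg]
    exact hχ.norm_fderiv_le x

theorem exists_isCutoff_of_separated [FiniteDimensional ℝ E] {S T : Set E} {r : ℝ} (hr : 0 < r)
    (hST : ∀ x ∈ S, ∀ y ∈ T, 3 * r ≤ dist x y) :
    ∃ χ : E → ℝ, IsCutoff r⁻¹ χ ∧ EqOn χ 1 S ∧ EqOn χ 0 T := by
  -- `infDist x ∅ = 0`, so the clamped distance below is useless for `S = ∅`.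
  rcases S.eq_empty_or_nonempty with rfl | hS
  · refine ⟨0, ⟨differentiable_const 0, fun _ => by simp, fun _ => ?_⟩, by simp, fun _ _ => rfl⟩
    simpa using hr.le
  borelize E
  set h : E → ℝ := fun x => max 0 (min 1 (2 - infDist x S / r))
  have hlip := lipschitzWith_clamp_infDist S hr
  have h_one : ∀ x, infDist x S ≤ r → h x = 1 := fun x hx => by
    have : infDist x S / r ≤ 1 := (div_le_one hr).2 hx
    simp [h, show 1 ≤ 2 - infDist x S / r by linarith]
  have h_zero : ∀ x, 2 * r ≤ infDist x S → h x = 0 := fun x hx => by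
    have : 2 ≤ infDist x S / r := (le_div_iff₀ hr).2 hx
    simp [h, show 2 - infDist x S / r ≤ 0 by linarith]
  let φ : ContDiffBump (0 : E) := ⟨r / 2, r, half_pos hr, half_lt_self hr⟩
  let μ : Measure E := Measure.addHaar
  have h_const : ∀ x c, (∀ y ∈ ball x r, h y = c) → (φ.normed μ ⋆[lsmul ℝ ℝ, μ] h) x = c :=
    fun x c hc => by
      rw [φ.normed_convolution_eq_right fun y hy => (hc y hy).trans (hc x (mem_ball_self hr)).symm,
        hc x (mem_ball_self hr)]
  refine ⟨φ.normed μ ⋆[lsmul ℝ ℝ, μ] h, ⟨?_, fun x => ?_, fun x => ?_⟩, fun x hx => ?_,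
    fun x hx => ?_⟩
  · exact (φ.hasCompactSupport_normed.contDiff_convolution_left (lsmul ℝ ℝ)
      (φ.contDiff_normed (n := 1)) hlip.continuous.locallyIntegrable).differentiable one_ne_zero
  · -- `[0, 1]` is the ball of radius `1 / 2` about `1 / 2`, and averaging stays in it.
    have h_mem : ∀ y, dist (h y) (1 / 2) ≤ 1 / 2 := fun y => by
      rw [Real.dist_eq, abs_le]
      constructor <;> simp only [h] <;> grind
    have := dist_convolution_le (by norm_num) φ.support_normed_eq.subset φ.nonneg_normed
      (φ.integral_normed (μ := μ)) hlip.continuous.aestronglyMeasurable (x₀ := x)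
      fun y _ => h_mem y
    rw [Real.dist_eq, abs_le] at this
    constructor <;> linarith [this.1, this.2]
  · exact (norm_fderiv_le_of_lipschitz ℝ (hlip.normed_convolution φ)).trans_eq
      (Real.coe_toNNReal _ (by positivity))
  · refine h_const x 1 fun y hy => h_one y ?_
    have := infDist_le_infDist_add_dist (x := y) (y := x) (s := S)
    rw [infDist_zero_of_mem hx] at this
    linarith [mem_ball.1 hy]
  · refine h_const x 0 fun y hy => h_zero y ?_
    have h3 : 3 * r ≤ infDist x S := (le_infDist hS).2 fun z hz => dist_comm x z ▸ hST z hz x hx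
    linarith [infDist_le_infDist_add_dist (x := x) (y := y) (s := S), mem_ball'.1 hy]

theorem IsCutoff.norm_fderiv_mul_le (hχ : IsCutoff ε χ) (hu : DifferentiableAt ℝ u x) :
    ‖fderiv ℝ (fun y => χ y * u y) x‖ ≤ χ x * ‖fderiv ℝ u x‖ + ε * |u x| := by
  rw [fderiv_fun_mul (hχ.differentiable x) hu]
  refine (norm_add_le _ _).trans ?_
  rw [norm_smul, norm_smul, Real.norm_of_nonneg (hχ.mem_Icc x).1, Real.norm_eq_abs, mul_comm ε]
  gcongr
  exact hχ.norm_fderiv_le x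

theorem IsCutoff.sq_norm_fderiv_mul_add_le (hχ : IsCutoff ε χ) (hu : DifferentiableAt ℝ u x) :
    ‖fderiv ℝ (fun y => χ y * u y) x‖ ^ 2 + ‖fderiv ℝ (fun y => (1 - χ y) * u y) x‖ ^ 2
      ≤ (1 + ε) * ‖fderiv ℝ u x‖ ^ 2 + (ε + 2 * ε ^ 2) * u x ^ 2 := by
  have h₁ := hχ.norm_fderiv_mul_le hu
  have h₂ := hχ.one_sub.norm_fderiv_mul_le hu
  obtain ⟨hc0, hc1⟩ := hχ.mem_Icc x
  have hε := hχ.nonneg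
  have hsq : |u x| ^ 2 = u x ^ 2 := sq_abs _
  -- `χ² + (1 - χ)² ≤ 1` and `2 |u| ‖∇u‖ ≤ u² + ‖∇u‖²`
  nlinarith [norm_nonneg (fderiv ℝ u x), norm_nonneg (fderiv ℝ (fun y => χ y * u y) x),
    norm_nonneg (fderiv ℝ (fun y => (1 - χ y) * u y) x), abs_nonneg (u x),
    sq_nonneg (|u x| - ‖fderiv ℝ u x‖), mul_nonneg hc0 (sub_nonneg.2 hc1)]

end Cutoff

section PointwiseSplitting

variable {α : Type*} {χ f f₁ f₂ : α → ℝ}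

theorem cutoff_mul_eq_add (h₁ : EqOn χ 1 (support f₁)) (h₀ : EqOn χ 0 (support f₂)) (x : α) :
    χ x * f x = f₁ x + χ x * (f x - f₁ x - f₂ x) := by
  have e₁ : χ x * f₁ x = f₁ x := by
    by_cases hx : f₁ x = 0
    · simp [hx]
    · simp [h₁ hx]
  have e₀ : χ x * f₂ x = 0 := by
    by_cases hx : f₂ x = 0
    · simp [hx]
    · simp [h₀ hx]
  linear_combination e₁ + e₀

theorem sq_cutoff_mul_le (hχ : ∀ x, χ x ∈ Icc (0 : ℝ) 1) (h₁ : EqOn χ 1 (support f₁))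
    (h₀ : EqOn χ 0 (support f₂)) {δ : ℝ} (hδ : 0 < δ) (x : α) :
    (χ x * f x) ^ 2 ≤ (1 + δ) * f₁ x ^ 2 + (1 + δ⁻¹) * (f x - f₁ x - f₂ x) ^ 2 := by
  rw [cutoff_mul_eq_add h₁ h₀ x]
  obtain ⟨hc0, hc1⟩ := hχ x
  set g := f x - f₁ x - f₂ x
  have hg : (χ x * g) ^ 2 ≤ g ^ 2 := by
    rw [mul_pow]; exact mul_le_of_le_one_left (sq_nonneg g) (pow_le_one₀ hc0 hc1)
  have hδ' : δ * δ⁻¹ = 1 := mul_inv_cancel₀ hδ.ne'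
  nlinarith [sq_nonneg (δ * f₁ x - χ x * g), inv_pos.2 hδ]

theorem pow_four_le_cutoff_split (h₁ : EqOn χ 1 (support f₁)) (h₀ : EqOn χ 0 (support f₂))
    (x : α) :
    f x ^ 4 ≤ (χ x * f x) ^ 4 + ((1 - χ x) * f x) ^ 4 + (f x - f₁ x - f₂ x) ^ 4 := by
  have h₄ : ∀ a : ℝ, 0 ≤ a ^ 4 := fun a => by positivity
  by_cases hx₁ : f₁ x = 0
  · by_cases hx₂ : f₂ x = 0
    · simp only [hx₁, hx₂, sub_zero]
      linarith [h₄ (χ x * f x), h₄ ((1 - χ x) * f x)]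
    · simp only [h₀ hx₂, Pi.zero_apply, sub_zero, one_mul]
      linarith [h₄ (0 * f x), h₄ (f x - f₁ x - f₂ x)]
  · simp only [h₁ hx₁, Pi.one_apply, one_mul]
    linarith [h₄ ((1 - 1) * f x), h₄ (f x - f₁ x - f₂ x)]

end PointwiseSplitting

namespace H1

variable {u f f₁ f₂ χ : Plane → ℝ} {ε : ℝ}

theorem integrable_sq (hu : H1 u) : Integrable (fun x => u x ^ 2) :=
  hu.2.1.integrable_sq

theorem integrable_pow_four (hu : H1 u) : Integrable (fun x => u x ^ 4) :=
  hu.2.2.1.integrable_pow_four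

theorem integrable_sq_norm_fderiv (hu : H1 u) : Integrable (fun x => ‖fderiv ℝ u x‖ ^ 2) :=
  (memLp_two_iff_integrable_sq_norm hu.2.2.2.aestronglyMeasurable).1 hu.2.2.2

theorem cutoff_mul (hu : H1 u) (hχ : IsCutoff ε χ) : H1 (fun x => χ x * u x) := by
  obtain ⟨hd, h₂, h₄, hD⟩ := hu
  have hdiff : Differentiable ℝ (fun x => χ x * u x) := hχ.differentiable.mul hd
  have hle : ∀ᵐ x, ‖χ x * u x‖ ≤ ‖u x‖ := ae_of_all _ fun x => by
    obtain ⟨h0, h1⟩ := hχ.mem_Icc x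
    rw [norm_mul, Real.norm_of_nonneg h0]
    exact mul_le_of_le_one_left (norm_nonneg _) h1
  refine ⟨hdiff, h₂.of_le hdiff.continuous.aestronglyMeasurable hle,
    h₄.of_le hdiff.continuous.aestronglyMeasurable hle, ?_⟩
  refine (hD.norm.add (h₂.norm.const_mul ε)).of_le
    (measurable_fderiv ℝ _).aestronglyMeasurable (ae_of_all _ fun x => ?_)
  have hε := hχ.nonneg
  rw [Pi.add_apply, Real.norm_of_nonneg (by positivity), Real.norm_eq_abs]
  refine (hχ.norm_fderiv_mul_le (hd x)).trans ?_
  gcongr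
  exact mul_le_of_le_one_left (norm_nonneg _) (hχ.mem_Icc x).2

theorem integral_sq_norm_fderiv_cutoff_le (hu : H1 u) (hχ : IsCutoff ε χ) :
    (∫ x, ‖fderiv ℝ (fun y => χ y * u y) x‖ ^ 2)
        + ∫ x, ‖fderiv ℝ (fun y => (1 - χ y) * u y) x‖ ^ 2
      ≤ (1 + ε) * (∫ x, ‖fderiv ℝ u x‖ ^ 2) + (ε + 2 * ε ^ 2) * ∫ x, u x ^ 2 := by
  rw [← integral_add (hu.cutoff_mul hχ).integrable_sq_norm_fderiv
      (hu.cutoff_mul hχ.one_sub).integrable_sq_norm_fderiv, ← integral_const_mul,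
    ← integral_const_mul, ← integral_add]
  · exact integral_mono_of_nonneg (ae_of_all _ fun x => by positivity)
      (hu.integrable_sq_norm_fderiv.const_mul _ |>.add (hu.integrable_sq.const_mul _))
      (ae_of_all _ fun x => hχ.sq_norm_fderiv_mul_add_le (hu.1 x))
  · exact hu.integrable_sq_norm_fderiv.const_mul _
  · exact hu.integrable_sq.const_mul _

theorem integral_sq_cutoff_mul_le (hf : H1 f) (hf₁ : H1 f₁) (hf₂ : H1 f₂) (hχ : IsCutoff ε χ)
    (h₁ : EqOn χ 1 (support f₁)) (h₀ : EqOn χ 0 (support f₂)) {δ : ℝ} (hδ : 0 < δ) :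
    ∫ x, (χ x * f x) ^ 2
      ≤ (1 + δ) * (∫ x, f₁ x ^ 2) + (1 + δ⁻¹) * ∫ x, (f x - f₁ x - f₂ x) ^ 2 := by
  have hg : Integrable (fun x => (f x - f₁ x - f₂ x) ^ 2) :=
    ((hf.2.1.sub hf₁.2.1).sub hf₂.2.1).integrable_sq
  rw [← integral_const_mul, ← integral_const_mul, ← integral_add (hf₁.integrable_sq.const_mul _)
    (hg.const_mul _)]
  exact integral_mono (hf.cutoff_mul hχ).integrable_sq
    ((hf₁.integrable_sq.const_mul _).add (hg.const_mul _))
    (sq_cutoff_mul_le hχ.mem_Icc h₁ h₀ hδ)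

theorem integral_pow_four_le_cutoff_split (hf : H1 f) (hf₁ : H1 f₁) (hf₂ : H1 f₂)
    (hχ : IsCutoff ε χ) (h₁ : EqOn χ 1 (support f₁)) (h₀ : EqOn χ 0 (support f₂)) :
    ∫ x, f x ^ 4 ≤ (∫ x, (χ x * f x) ^ 4) + (∫ x, ((1 - χ x) * f x) ^ 4)
      + ∫ x, (f x - f₁ x - f₂ x) ^ 4 := by
  have i₁ := (hf.cutoff_mul hχ).integrable_pow_four
  have i₂ := (hf.cutoff_mul hχ.one_sub).integrable_pow_four
  have i₁₂ : Integrable (fun x => (χ x * f x) ^ 4 + ((1 - χ x) * f x) ^ 4) := i₁.add i₂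
  have hg : Integrable (fun x => (f x - f₁ x - f₂ x) ^ 4) :=
    ((hf.2.2.1.sub hf₁.2.2.1).sub hf₂.2.2.1).integrable_pow_four
  rw [← integral_add i₁ i₂, ← integral_add i₁₂ hg]
  exact integral_mono hf.integrable_pow_four (i₁₂.add hg) (pow_four_le_cutoff_split h₁ h₀)

end H1

theorem gagliardoNirenberg_quartic_le_of_cutoff {astar ε : ℝ} (hastar : 0 ≤ astar) (hε : 0 < ε)
    (hGN : ∀ u : Plane → ℝ, H1 u →
      astar / 2 * ∫ x, u x ^ 4 ≤ (∫ x, ‖fderiv ℝ u x‖ ^ 2) * ∫ x, u x ^ 2)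
    {f f₁ f₂ χ : Plane → ℝ} (hf : H1 f) (hf₁ : H1 f₁) (hf₂ : H1 f₂)
    (hnorm : ∫ x, f x ^ 2 = 1) (hgrad : ∫ x, ‖fderiv ℝ f x‖ ^ 2 = 1)
    (hχ : IsCutoff ε χ) (h₁ : EqOn χ 1 (support f₁)) (h₀ : EqOn χ 0 (support f₂)) :
    astar / 2 * ∫ x, f x ^ 4
      ≤ (1 + 2 * ε + 2 * ε ^ 2) * ((1 + ε) * max (∫ x, f₁ x ^ 2) (∫ x, f₂ x ^ 2)
          + (1 + ε⁻¹) * ∫ x, (f x - f₁ x - f₂ x) ^ 2)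
        + astar / 2 * ∫ x, (f x - f₁ x - f₂ x) ^ 4 := by
  set B := (1 + ε) * max (∫ x, f₁ x ^ 2) (∫ x, f₂ x ^ 2)
    + (1 + ε⁻¹) * ∫ x, (f x - f₁ x - f₂ x) ^ 2
  have hB₁ : ∫ x, (χ x * f x) ^ 2 ≤ B :=
    (hf.integral_sq_cutoff_mul_le hf₁ hf₂ hχ h₁ h₀ hε).trans
      (by simp only [B]; gcongr; exact le_max_left _ _)
  have hB₂ : ∫ x, ((1 - χ x) * f x) ^ 2 ≤ B := by
    have h₁' : EqOn (fun x => 1 - χ x) 1 (support f₂) := fun x hx => by simp [h₀ hx]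
    have h₀' : EqOn (fun x => 1 - χ x) 0 (support f₁) := fun x hx => by simp [h₁ hx]
    refine (hf.integral_sq_cutoff_mul_le hf₂ hf₁ hχ.one_sub h₁' h₀' hε).trans ?_
    simp only [B, sub_right_comm (f _) (f₂ _)]
    gcongr
    exact le_max_right _ _
  have hgrad_split := hf.integral_sq_norm_fderiv_cutoff_le hχ
  rw [hgrad, hnorm] at hgrad_split
  have hGN₁ := hGN _ (hf.cutoff_mul hχ)
  have hGN₂ := hGN _ (hf.cutoff_mul hχ.one_sub)
  have hD₁ : 0 ≤ ∫ x, ‖fderiv ℝ (fun y => χ y * f y) x‖ ^ 2 :=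
    integral_nonneg fun _ => by positivity
  have hD₂ : 0 ≤ ∫ x, ‖fderiv ℝ (fun y => (1 - χ y) * f y) x‖ ^ 2 :=
    integral_nonneg fun _ => by positivity
  have hB : 0 ≤ B := (integral_nonneg fun _ => by positivity).trans hB₁
  calc astar / 2 * ∫ x, f x ^ 4
      ≤ astar / 2 * (∫ x, (χ x * f x) ^ 4) + astar / 2 * (∫ x, ((1 - χ x) * f x) ^ 4)
          + astar / 2 * ∫ x, (f x - f₁ x - f₂ x) ^ 4 := by
        rw [← mul_add, ← mul_add]
        gcongr
        exact hf.integral_pow_four_le_cutoff_split hf₁ hf₂ hχ h₁ h₀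
    _ ≤ ((∫ x, ‖fderiv ℝ (fun y => χ y * f y) x‖ ^ 2)
          + ∫ x, ‖fderiv ℝ (fun y => (1 - χ y) * f y) x‖ ^ 2) * B
          + astar / 2 * ∫ x, (f x - f₁ x - f₂ x) ^ 4 := by
        linarith [hGN₁.trans (mul_le_mul_of_nonneg_left hB₁ hD₁),
          hGN₂.trans (mul_le_mul_of_nonneg_left hB₂ hD₂)]
    _ ≤ (1 + 2 * ε + 2 * ε ^ 2) * B + astar / 2 * ∫ x, (f x - f₁ x - f₂ x) ^ 4 := by
        have := mul_le_mul_of_nonneg_right hgrad_split hB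
        linarith

theorem no_dichotomy_for_GN_optimizing_sequences_general (astar : ℝ) (hastar : 0 < astar)
    (hGN : ∀ u : Plane → ℝ, H1 u →
      astar / 2 * ∫ x : Plane, (u x) ^ 4
        ≤ (∫ x : Plane, ‖fderiv ℝ u x‖ ^ 2) * ∫ x : Plane, (u x) ^ 2)
    (f : ℕ → Plane → ℝ) (hf : ∀ n, H1 (f n))
    (hnorm : ∀ n, ∫ x : Plane, (f n x) ^ 2 = 1)
    (hgrad : ∀ n, ∫ x : Plane, ‖fderiv ℝ (f n) x‖ ^ 2 = 1)
    (hL4 : Tendsto (fun n => astar / 2 * ∫ x : Plane, (f n x) ^ 4) atTop (𝓝 1))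
    (lam : ℝ) (h0 : 0 < lam) (h1 : lam < 1)
    (f1 f2 : ℕ → Plane → ℝ) (hf1 : ∀ n, H1 (f1 n)) (hf2 : ∀ n, H1 (f2 n))
    (hm1 : Tendsto (fun n => ∫ x : Plane, (f1 n x) ^ 2) atTop (𝓝 lam))
    (hm2 : Tendsto (fun n => ∫ x : Plane, (f2 n x) ^ 2) atTop (𝓝 (1 - lam)))
    (hdist : ∀ r : ℝ, ∀ᶠ n in atTop, ∀ x ∈ Function.support (f1 n),
      ∀ y ∈ Function.support (f2 n), r ≤ dist x y)
    (hLp : ∀ p : ℝ, 2 ≤ p →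
      Tendsto (fun n => ∫ x : Plane, |f n x - f1 n x - f2 n x| ^ p) atTop (𝓝 0)) :
    False := by
  have hL2 : Tendsto (fun n => ∫ x, (f n x - f1 n x - f2 n x) ^ 2) atTop (𝓝 0) := by
    simpa using hLp 2 le_rfl
  have hL4' : Tendsto (fun n => ∫ x, (f n x - f1 n x - f2 n x) ^ 4) atTop (𝓝 0) := by
    simpa [(by decide : Even 4).pow_abs] using hLp 4 (by norm_num)
  set m := max lam (1 - lam)
  have hbound : ∀ ε > 0, 1 ≤ (1 + 2 * ε + 2 * ε ^ 2) * ((1 + ε) * m) := by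
    intro ε hε
    have hlim := ((((hm1.max hm2).const_mul (1 + ε)).add (hL2.const_mul (1 + ε⁻¹))).const_mul
      (1 + 2 * ε + 2 * ε ^ 2)).add (hL4'.const_mul (astar / 2))
    simp only [mul_zero, add_zero] at hlim
    refine le_of_tendsto_of_tendsto hL4 hlim ?_
    filter_upwards [hdist (3 * ε⁻¹)] with n hn
    obtain ⟨χ, hχ, h₁, h₀⟩ := exists_isCutoff_of_separated (inv_pos.2 hε) hn
    rw [inv_inv] at hχ
    exact gagliardoNirenberg_quartic_le_of_cutoff hastar.le hε hGN (hf n) (hf1 n) (hf2 n)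
      (hnorm n) (hgrad n) hχ h₁ h₀
  have hm : 1 ≤ m := by
    have hcont : Tendsto (fun ε => (1 + 2 * ε + 2 * ε ^ 2) * ((1 + ε) * m)) (𝓝[>] 0) (𝓝 m) := by
      have : Continuous fun ε : ℝ => (1 + 2 * ε + 2 * ε ^ 2) * ((1 + ε) * m) := by fun_prop
      simpa using (this.tendsto 0).mono_left nhdsWithin_le_nhds
    exact ge_of_tendsto hcont (eventually_nhdsWithin_of_forall hbound)
  exact (max_lt h1 (by linarith)).not_ge hm

/-- Dichotomy cannot occur for almost-optimizing sequences of the 2D Gagliardo–Nirenberg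
inequality: if `‖f_n‖_{L²} = ‖∇f_n‖_{L²} = 1`, `(a*/2)‖f_n‖_{L⁴}⁴ → 1`, and the dichotomy
alternative held with parameter `λ ∈ (0,1)`, one would get `1 ≥ min{1/λ, 1/(1−λ)}`,
a contradiction. -/
theorem no_dichotomy_for_GN_optimizing_sequences (astar : ℝ) (hastar : 0 < astar)
    (hGN : ∀ u : Plane → ℝ, H1 u →
      astar / 2 * ∫ x : Plane, (u x) ^ 4
        ≤ (∫ x : Plane, ‖fderiv ℝ u x‖ ^ 2) * ∫ x : Plane, (u x) ^ 2)
    (f : ℕ → Plane → ℝ) (hf : ∀ n, H1 (f n))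
    (hnorm : ∀ n, ∫ x : Plane, (f n x) ^ 2 = 1)
    (hgrad : ∀ n, ∫ x : Plane, ‖fderiv ℝ (f n) x‖ ^ 2 = 1)
    (hL4 : Tendsto (fun n => astar / 2 * ∫ x : Plane, (f n x) ^ 4) atTop (𝓝 1))
    (lam : ℝ) (h0 : 0 < lam) (h1 : lam < 1)
    (f1 f2 : ℕ → Plane → ℝ) (hf1 : ∀ n, H1 (f1 n)) (hf2 : ∀ n, H1 (f2 n))
    (hm1 : Tendsto (fun n => ∫ x : Plane, (f1 n x) ^ 2) atTop (𝓝 lam))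
    (hm2 : Tendsto (fun n => ∫ x : Plane, (f2 n x) ^ 2) atTop (𝓝 (1 - lam)))
    (hdisj : ∀ n, Disjoint (Function.support (f1 n)) (Function.support (f2 n)))
    (hdist : ∀ r : ℝ, ∀ᶠ n in atTop, ∀ x ∈ Function.support (f1 n),
      ∀ y ∈ Function.support (f2 n), r ≤ dist x y)
    (hLp : ∀ p : ℝ, 2 ≤ p →
      Tendsto (fun n => ∫ x : Plane, |f n x - f1 n x - f2 n x| ^ p) atTop (𝓝 0))
    (hgradsplit : 0 ≤ liminf (fun n => (∫ x : Plane, ‖fderiv ℝ (f n) x‖ ^ 2)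
      - (∫ x : Plane, ‖fderiv ℝ (f1 n) x‖ ^ 2)
      - ∫ x : Plane, ‖fderiv ℝ (f2 n) x‖ ^ 2) atTop) :
    False :=
  no_dichotomy_for_GN_optimizing_sequences_general astar hastar hGN f hf hnorm hgrad hL4 lam h0 h1
    f1 f2 hf1 hf2 hm1 hm2 hdist hLp
end
end
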